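/- Let A and B be positive invertible operators with mI ≤ A ≤ MI and mI ≤ B ≤ MI for scalars 0 < m ≤ M, and let α, β ∈ [0,1]. Then λ^{-1}(A ∇_α B) ≤ A ♯_β B ≤ λ (A !_α B), where λ = max{(1-α)(m/M)^β + α(M/m)^{1-β}, (1-α)(M/m)^β + α(m/M)^{1-β}}. -/

import Mathlib

/-!
Write `S = A^{1/2}` and `C = A^{-1/2} B A^{-1/2}`. Then `A ♯_β B = S C^β S`,
`A ∇_α B = S ((1-α) + α C) S` and `A !_α B = S ((1-α) + α C⁻¹)⁻¹ S`, and the bounds on `A` and `B`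
confine the spectrum of `C` to `[m/M, M/m]`. By congruence and the functional calculus it suffices
to show `λ⁻¹ ((1-α) + α x) ≤ x^β ≤ λ ((1-α) + α x⁻¹)⁻¹` on that interval, i.e. that
`((1-α) + α x) x^{-β} ≤ λ` at `x` and at `x⁻¹`. This function is convex in `log x`, so on the
interval it is bounded by its values at the endpoints, whose maximum is `λ`.
-/

open scoped ComplexOrder

/-- `A ^ r` for a Hermitian matrix, via the continuous functional calculus. -/
noncomputable def mpow {n : ℕ} (A : Matrix (Fin n) (Fin n) ℂ) (r : ℝ) : Matrix (Fin n) (Fin n) ℂ :=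
  cfc (fun x : ℝ => x ^ r) A

/-- The β-weighted operator geometric mean `A ♯_β B = A^{1/2}(A^{-1/2} B A^{-1/2})^β A^{1/2}`. -/
noncomputable def geomMean {n : ℕ} (A B : Matrix (Fin n) (Fin n) ℂ) (β : ℝ) :
    Matrix (Fin n) (Fin n) ℂ :=
  mpow A (1/2) * mpow (mpow A (-(1/2)) * B * mpow A (-(1/2))) β * mpow A (1/2)

/-- The α-weighted operator harmonic mean `A !_α B = ((1-α)A⁻¹ + αB⁻¹)⁻¹`. -/
noncomputable def harmMean {n : ℕ} (A B : Matrix (Fin n) (Fin n) ℂ) (α : ℝ) :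
    Matrix (Fin n) (Fin n) ℂ :=
  ((1 - α) • A⁻¹ + α • B⁻¹)⁻¹

open scoped MatrixOrder
open Matrix Set

/-- `(1 ∇_α x) / (1 ♯_β x)` for a positive scalar `x`. -/
noncomputable def meanRatio (α β x : ℝ) : ℝ := (1 - α) * x ^ (-β) + α * x ^ (1 - β)

section Scalar

variable {α β a b r x : ℝ}

lemma meanRatio_exp (t : ℝ) :
    meanRatio α β (Real.exp t) = (1 - α) * Real.exp (-β * t) + α * Real.exp ((1 - β) * t) := by
  simp only [meanRatio, ← Real.exp_mul, mul_comm t]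

lemma convexOn_meanRatio_exp (hα0 : 0 ≤ α) (hα1 : α ≤ 1) :
    ConvexOn ℝ univ (fun t => meanRatio α β (Real.exp t)) := by
  have hexp (c : ℝ) : ConvexOn ℝ univ (fun t => Real.exp (c * t)) := by
    simpa [Function.comp_def] using convexOn_exp.comp_linearMap (LinearMap.lsmul ℝ ℝ c)
  simp only [meanRatio_exp]
  exact ((hexp _).smul (sub_nonneg.mpr hα1)).add ((hexp _).smul hα0)

lemma meanRatio_le_max (hα0 : 0 ≤ α) (hα1 : α ≤ 1) (ha : 0 < a)
    (hx : x ∈ Icc a b) : meanRatio α β x ≤ max (meanRatio α β a) (meanRatio α β b) := by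
  have hx0 : 0 < x := ha.trans_le hx.1
  have hseg : Real.log x ∈ segment ℝ (Real.log a) (Real.log b) := by
    rw [segment_eq_Icc (Real.log_le_log ha (hx.1.trans hx.2))]
    exact ⟨Real.log_le_log ha hx.1, Real.log_le_log hx0 hx.2⟩
  simpa only [Real.exp_log, ha, hx0, ha.trans_le (hx.1.trans hx.2)] using
    (convexOn_meanRatio_exp (β := β) hα0 hα1).le_on_segment trivial trivial hseg

lemma meanRatio_div {m M : ℝ} (hm : 0 < m) (hM : 0 < M) :
    meanRatio α β (M / m) = (1 - α) * (m / M) ^ β + α * (M / m) ^ (1 - β) := by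
  rw [meanRatio, Real.rpow_neg (by positivity), ← Real.inv_rpow (by positivity), inv_div]

lemma meanRatio_eq_div (hx : 0 < x) : meanRatio α β x = ((1 - α) + α * x) / x ^ β := by
  rw [meanRatio, Real.rpow_neg hx.le, Real.rpow_sub hx, Real.rpow_one]
  field_simp

lemma one_sub_add_mul_pos (hα0 : 0 ≤ α) (hα1 : α ≤ 1) (hx : 0 < x) : 0 < (1 - α) + α * x := by
  rcases hα1.lt_or_eq with hα | rfl
  · nlinarith
  · simpa using hx

lemma meanRatio_pos (hα0 : 0 ≤ α) (hα1 : α ≤ 1) (hx : 0 < x) : 0 < meanRatio α β x := by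
  rw [meanRatio_eq_div hx]
  exact div_pos (one_sub_add_mul_pos hα0 hα1 hx) (Real.rpow_pos_of_pos hx β)

lemma meanRatio_le_max_inv (hα0 : 0 ≤ α) (hα1 : α ≤ 1) (hr : 0 < r) (hx : x ∈ Icc r⁻¹ r) :
    meanRatio α β x ≤ max (meanRatio α β r) (meanRatio α β r⁻¹) :=
  max_comm (meanRatio α β r) _ ▸ meanRatio_le_max hα0 hα1 (inv_pos.mpr hr) hx

lemma one_sub_add_mul_le_mul_rpow (hα0 : 0 ≤ α) (hα1 : α ≤ 1) (hr : 0 < r)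
    (hx : x ∈ Icc r⁻¹ r) :
    (1 - α) + α * x ≤ max (meanRatio α β r) (meanRatio α β r⁻¹) * x ^ β := by
  have hx0 : 0 < x := (inv_pos.mpr hr).trans_le hx.1
  have h := meanRatio_le_max_inv (β := β) hα0 hα1 hr hx
  rwa [meanRatio_eq_div hx0, div_le_iff₀ (Real.rpow_pos_of_pos hx0 β)] at h

lemma rpow_le_mul_inv_one_sub_add_mul_inv (hα0 : 0 ≤ α) (hα1 : α ≤ 1) (hr : 0 < r)
    (hx : x ∈ Icc r⁻¹ r) :
    x ^ β ≤ max (meanRatio α β r) (meanRatio α β r⁻¹) * ((1 - α) + α * x⁻¹)⁻¹ := by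
  have hx0 : 0 < x := (inv_pos.mpr hr).trans_le hx.1
  have hxinv : x⁻¹ ∈ Icc r⁻¹ r :=
    ⟨inv_anti₀ hx0 hx.2, by simpa using inv_anti₀ (inv_pos.mpr hr) hx.1⟩
  have hd := one_sub_add_mul_pos hα0 hα1 (inv_pos.mpr hx0)
  have h := meanRatio_le_max_inv (β := β) hα0 hα1 hr hxinv
  rw [meanRatio_eq_div (inv_pos.mpr hx0), Real.inv_rpow hx0.le, div_inv_eq_mul] at h
  rw [← div_eq_mul_inv, le_div_iff₀ hd]
  linarith

end Scalar

lemma div_smul_le_of_le_smul {R : Type*} [AddCommGroup R] [PartialOrder R] [Module ℝ R]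
    [PosSMulMono ℝ R] {E X Y : R} {a b : ℝ} (ha : 0 ≤ a) (hb : 0 < b)
    (hX : X ≤ b • E) (hY : a • E ≤ Y) : (a / b) • X ≤ Y :=
  calc (a / b) • X ≤ (a / b) • (b • E) := smul_le_smul_of_nonneg_left hX (by positivity)
    _ = a • E := by rw [smul_smul, div_mul_cancel₀ _ hb.ne']
    _ ≤ Y := hY

lemma le_div_smul_of_smul_le {R : Type*} [AddCommGroup R] [PartialOrder R] [Module ℝ R]
    [PosSMulMono ℝ R] {E X Y : R} {a b : ℝ} (ha : 0 < a) (hb : 0 ≤ b)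
    (hX : X ≤ b • E) (hY : a • E ≤ Y) : X ≤ (b / a) • Y :=
  calc X ≤ b • E := hX
    _ = (b / a) • (a • E) := by rw [smul_smul, div_mul_cancel₀ _ ha.ne']
    _ ≤ (b / a) • Y := smul_le_smul_of_nonneg_left hY (by positivity)

namespace Matrix

variable {𝕜 ι : Type*} [RCLike 𝕜] [Fintype ι] [DecidableEq ι]

lemma continuousOn_spectrum (f : ℝ → ℝ) (X : Matrix ι ι 𝕜) : ContinuousOn f (spectrum ℝ X) :=
  X.finite_real_spectrum.continuousOn f

lemma spectrum_subset_Icc {X : Matrix ι ι 𝕜} (hX : IsSelfAdjoint X) {a b : ℝ}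
    (ha : a • (1 : Matrix ι ι 𝕜) ≤ X) (hb : X ≤ b • 1) : spectrum ℝ X ⊆ Icc a b := by
  rw [← Algebra.algebraMap_eq_smul_one, algebraMap_le_iff_le_spectrum] at ha
  rw [← Algebra.algebraMap_eq_smul_one, le_algebraMap_iff_spectrum_le] at hb
  exact fun x hx => ⟨ha x hx, hb x hx⟩

lemma cfc_inv_eq_inv (f : ℝ → ℝ) (X : Matrix ι ι 𝕜) (hf : ∀ x ∈ spectrum ℝ X, f x ≠ 0)
    (hX : IsSelfAdjoint X) : cfc (fun x => (f x)⁻¹) X = (cfc f X)⁻¹ := by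
  rw [nonsing_inv_eq_ringInverse, cfc_inv f X hf (continuousOn_spectrum f X)]

lemma cfc_const_add_const_mul (a b : ℝ) (f : ℝ → ℝ) (X : Matrix ι ι 𝕜) (hX : IsSelfAdjoint X) :
    cfc (fun x => a + b * f x) X = a • 1 + b • cfc f X := by
  rw [cfc_add (hf := continuousOn_spectrum _ X) (hg := continuousOn_spectrum _ X),
    cfc_const_mul (hf := continuousOn_spectrum _ X), cfc_const a X hX,
    Algebra.algebraMap_eq_smul_one]

end Matrix

section mpow

variable {n : ℕ} {A : Matrix (Fin n) (Fin n) ℂ}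

lemma isSelfAdjoint_mpow (A : Matrix (Fin n) (Fin n) ℂ) (r : ℝ) : IsSelfAdjoint (mpow A r) :=
  cfc_predicate _ A

lemma mpow_mul_mpow (hA : A.PosDef) (r s : ℝ) : mpow A r * mpow A s = mpow A (r + s) := by
  rw [mpow, mpow, mpow, ← cfc_mul _ _ A (continuousOn_spectrum _ A) (continuousOn_spectrum _ A)]
  exact cfc_congr fun x hx => (Real.rpow_add (hA.isStrictlyPositive.spectrum_pos hx) r s).symm

lemma mpow_zero (hA : A.IsHermitian) : mpow A 0 = 1 := by
  simp only [mpow, Real.rpow_zero]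
  exact cfc_const_one ℝ A hA

lemma mpow_one (hA : A.IsHermitian) : mpow A 1 = A := by
  simp only [mpow, Real.rpow_one]
  exact cfc_id' ℝ A hA

lemma mpow_half_mul_mpow_neg_half (hA : A.PosDef) : mpow A (1 / 2) * mpow A (-(1 / 2)) = 1 := by
  rw [mpow_mul_mpow hA, add_neg_cancel, mpow_zero hA.isHermitian]

lemma mpow_neg_half_mul_mpow_half (hA : A.PosDef) : mpow A (-(1 / 2)) * mpow A (1 / 2) = 1 := by
  rw [mpow_mul_mpow hA, neg_add_cancel, mpow_zero hA.isHermitian]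

lemma mpow_half_mul_mpow_half (hA : A.PosDef) : mpow A (1 / 2) * mpow A (1 / 2) = A := by
  rw [mpow_mul_mpow hA, add_halves, mpow_one hA.isHermitian]

lemma mpow_neg_half_mul_mpow_neg_half (hA : A.PosDef) :
    mpow A (-(1 / 2)) * mpow A (-(1 / 2)) = A⁻¹ := by
  refine (inv_eq_right_inv ?_).symm
  calc A * (mpow A (-(1 / 2)) * mpow A (-(1 / 2)))
      = mpow A (1 / 2) * (mpow A (1 / 2) * mpow A (-(1 / 2))) * mpow A (-(1 / 2)) := by
        nth_rw 1 [← mpow_half_mul_mpow_half hA]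
        simp only [mul_assoc]
    _ = 1 := by rw [mpow_half_mul_mpow_neg_half hA, mul_one, mpow_half_mul_mpow_neg_half hA]

lemma mpow_neg_half_conj_self (hA : A.PosDef) :
    mpow A (-(1 / 2)) * A * mpow A (-(1 / 2)) = 1 := by
  calc mpow A (-(1 / 2)) * A * mpow A (-(1 / 2))
      = mpow A (-(1 / 2)) * mpow A (1 / 2) * (mpow A (1 / 2) * mpow A (-(1 / 2))) := by
        nth_rw 2 [← mpow_half_mul_mpow_half hA]
        simp only [mul_assoc]
    _ = 1 := by rw [mpow_neg_half_mul_mpow_half hA, mpow_half_mul_mpow_neg_half hA, one_mul]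

lemma inv_mpow_neg_half (hA : A.PosDef) : (mpow A (-(1 / 2)))⁻¹ = mpow A (1 / 2) :=
  inv_eq_right_inv (mpow_neg_half_mul_mpow_half hA)

end mpow

noncomputable def conjInvSqrt {n : ℕ} (A B : Matrix (Fin n) (Fin n) ℂ) : Matrix (Fin n) (Fin n) ℂ :=
  mpow A (-(1 / 2)) * B * mpow A (-(1 / 2))

section conjInvSqrt

variable {n : ℕ} {A B : Matrix (Fin n) (Fin n) ℂ}

lemma isSelfAdjoint_conjInvSqrt (hB : B.IsHermitian) : IsSelfAdjoint (conjInvSqrt A B) :=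
  hB.isSelfAdjoint.conjugate_self (isSelfAdjoint_mpow A _)

lemma mpow_half_conj_conjInvSqrt (hA : A.PosDef) :
    mpow A (1 / 2) * conjInvSqrt A B * mpow A (1 / 2) = B := by
  calc mpow A (1 / 2) * conjInvSqrt A B * mpow A (1 / 2)
      = mpow A (1 / 2) * mpow A (-(1 / 2)) * B * (mpow A (-(1 / 2)) * mpow A (1 / 2)) := by
        simp only [conjInvSqrt, mul_assoc]
    _ = B := by
        rw [mpow_half_mul_mpow_neg_half hA, mpow_neg_half_mul_mpow_half hA, one_mul, mul_one]

lemma inv_eq_mpow_neg_half_conj_inv_conjInvSqrt (hA : A.PosDef) :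
    B⁻¹ = mpow A (-(1 / 2)) * (conjInvSqrt A B)⁻¹ * mpow A (-(1 / 2)) := by
  calc B⁻¹ = mpow A (-(1 / 2)) * mpow A (1 / 2) * B⁻¹ * (mpow A (1 / 2) * mpow A (-(1 / 2))) := by
        rw [mpow_neg_half_mul_mpow_half hA, mpow_half_mul_mpow_neg_half hA, one_mul, mul_one]
    _ = mpow A (-(1 / 2)) * (conjInvSqrt A B)⁻¹ * mpow A (-(1 / 2)) := by
        simp only [conjInvSqrt, Matrix.mul_inv_rev, inv_mpow_neg_half hA, mul_assoc]

lemma spectrum_conjInvSqrt_subset (hA : A.PosDef) (hB : B.IsHermitian) {m M : ℝ} (hm : 0 < m)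
    (hM : 0 < M) (hAm : m • 1 ≤ A) (hAM : A ≤ M • 1) (hBm : m • 1 ≤ B) (hBM : B ≤ M • 1) :
    spectrum ℝ (conjInvSqrt A B) ⊆ Icc (M / m)⁻¹ (M / m) := by
  have hT := isSelfAdjoint_mpow A (-(1 / 2))
  have hconj (c : ℝ) : mpow A (-(1 / 2)) * (c • A) * mpow A (-(1 / 2)) = c • 1 := by
    rw [mul_smul_comm, smul_mul_assoc, mpow_neg_half_conj_self hA]
  refine spectrum_subset_Icc (isSelfAdjoint_conjInvSqrt hB) ?_ ?_
  · rw [inv_div, ← hconj]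
    exact hT.conjugate_le_conjugate (div_smul_le_of_le_smul hm.le hM hAM hBm)
  · rw [← hconj]
    exact hT.conjugate_le_conjugate (le_div_smul_of_smul_le hm hM.le hBM hAm)

end conjInvSqrt

section Means

variable {n : ℕ} {A B X : Matrix (Fin n) (Fin n) ℂ} {α β r : ℝ}

lemma geomMean_eq_conj :
    geomMean A B β = mpow A (1 / 2) * mpow (conjInvSqrt A B) β * mpow A (1 / 2) :=
  rfl

lemma one_sub_smul_add_smul_eq_conj (hA : A.PosDef) :
    (1 - α) • A + α • B
      = mpow A (1 / 2) * ((1 - α) • 1 + α • conjInvSqrt A B) * mpow A (1 / 2) := by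
  rw [mul_add, add_mul, mul_smul_comm, smul_mul_assoc, mul_smul_comm, smul_mul_assoc, mul_one,
    mpow_half_mul_mpow_half hA, mpow_half_conj_conjInvSqrt hA]

lemma harmMean_eq_conj (hA : A.PosDef) :
    harmMean A B α
      = mpow A (1 / 2) * ((1 - α) • 1 + α • (conjInvSqrt A B)⁻¹)⁻¹ * mpow A (1 / 2) := by
  have hsum : (1 - α) • A⁻¹ + α • B⁻¹
      = mpow A (-(1 / 2)) * ((1 - α) • 1 + α • (conjInvSqrt A B)⁻¹) * mpow A (-(1 / 2)) := by
    rw [← mpow_neg_half_mul_mpow_neg_half hA, inv_eq_mpow_neg_half_conj_inv_conjInvSqrt hA,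
      mul_add, add_mul, mul_smul_comm, smul_mul_assoc, mul_smul_comm, smul_mul_assoc, mul_one]
  rw [harmMean, hsum, Matrix.mul_inv_rev, Matrix.mul_inv_rev, inv_mpow_neg_half hA, mul_assoc]

lemma smul_one_sub_smul_add_smul_le_mpow (hX : IsSelfAdjoint X) (hα0 : 0 ≤ α) (hα1 : α ≤ 1)
    (hr : 0 < r) (hspec : spectrum ℝ X ⊆ Icc r⁻¹ r) :
    (max (meanRatio α β r) (meanRatio α β r⁻¹))⁻¹ • ((1 - α) • 1 + α • X) ≤ mpow X β := by
  have hlam : 0 < max (meanRatio α β r) (meanRatio α β r⁻¹) :=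
    lt_max_of_lt_left (meanRatio_pos hα0 hα1 hr)
  have hXaff : (1 - α) • 1 + α • X = cfc (fun x => (1 - α) + α * id x) X := by
    rw [cfc_const_add_const_mul _ _ _ X hX, cfc_id ℝ X hX]
  rw [hXaff, ← cfc_const_mul _ _ X (continuousOn_spectrum _ X)]
  refine cfc_mono (fun x hx => ?_) (continuousOn_spectrum _ X) (continuousOn_spectrum _ X)
  rw [inv_mul_le_iff₀ hlam]
  exact one_sub_add_mul_le_mul_rpow hα0 hα1 hr (hspec hx)

lemma mpow_le_smul_inv_one_sub_smul_add_smul_inv (hX : IsSelfAdjoint X) (hα0 : 0 ≤ α)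
    (hα1 : α ≤ 1) (hr : 0 < r) (hspec : spectrum ℝ X ⊆ Icc r⁻¹ r) :
    mpow X β ≤ max (meanRatio α β r) (meanRatio α β r⁻¹) • ((1 - α) • 1 + α • X⁻¹)⁻¹ := by
  have hpos {x : ℝ} (hx : x ∈ spectrum ℝ X) : 0 < x := (inv_pos.mpr hr).trans_le (hspec hx).1
  have hXinv : X⁻¹ = cfc (fun x : ℝ => x⁻¹) X := by
    have h := cfc_inv_eq_inv (id : ℝ → ℝ) X (fun x hx => (hpos hx).ne') hX
    rw [cfc_id ℝ X hX] at h
    exact h.symm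
  rw [hXinv, ← cfc_const_add_const_mul _ _ _ X hX,
    ← cfc_inv_eq_inv _ X (fun x hx => (one_sub_add_mul_pos hα0 hα1 (inv_pos.mpr (hpos hx))).ne') hX,
    ← cfc_const_mul _ _ X (continuousOn_spectrum _ X)]
  exact cfc_mono (fun x hx => rpow_le_mul_inv_one_sub_add_mul_inv hα0 hα1 hr (hspec hx))
    (continuousOn_spectrum _ X) (continuousOn_spectrum _ X)

end Means

theorem sandwich_means_general {n : ℕ} (A B : Matrix (Fin n) (Fin n) ℂ) (m M α β : ℝ)
    (hA : A.PosDef) (hB : B.PosDef) (hm : 0 < m) (hmM : m ≤ M)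
    (hAm : (A - m • (1 : Matrix (Fin n) (Fin n) ℂ)).PosSemidef)
    (hAM : (M • (1 : Matrix (Fin n) (Fin n) ℂ) - A).PosSemidef)
    (hBm : (B - m • (1 : Matrix (Fin n) (Fin n) ℂ)).PosSemidef)
    (hBM : (M • (1 : Matrix (Fin n) (Fin n) ℂ) - B).PosSemidef)
    (hα0 : 0 ≤ α) (hα1 : α ≤ 1) :
    (geomMean A B β -
        (max ((1 - α) * (m / M) ^ β + α * (M / m) ^ (1 - β))
             ((1 - α) * (M / m) ^ β + α * (m / M) ^ (1 - β)))⁻¹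
          • ((1 - α) • A + α • B)).PosSemidef ∧
    ((max ((1 - α) * (m / M) ^ β + α * (M / m) ^ (1 - β))
          ((1 - α) * (M / m) ^ β + α * (m / M) ^ (1 - β)))
        • harmMean A B α - geomMean A B β).PosSemidef := by
  have hM : 0 < M := hm.trans_le hmM
  have hspec := spectrum_conjInvSqrt_subset hA hB.isHermitian hm hM hAm hAM hBm hBM
  have hC := isSelfAdjoint_conjInvSqrt (A := A) hB.isHermitian
  have hS := isSelfAdjoint_mpow A (1 / 2)
  rw [← meanRatio_div hm hM, ← meanRatio_div hM hm, ← inv_div M m]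
  constructor
  · rw [geomMean_eq_conj, one_sub_smul_add_smul_eq_conj hA, ← smul_mul_assoc, ← mul_smul_comm]
    exact hS.conjugate_le_conjugate
      (smul_one_sub_smul_add_smul_le_mpow hC hα0 hα1 (by positivity) hspec)
  · rw [geomMean_eq_conj, harmMean_eq_conj hA, ← smul_mul_assoc, ← mul_smul_comm]
    exact hS.conjugate_le_conjugate
      (mpow_le_smul_inv_one_sub_smul_add_smul_inv hC hα0 hα1 (by positivity) hspec)

/-- If `mI ≤ A, B ≤ MI`, then `λ⁻¹(A ∇_α B) ≤ A ♯_β B ≤ λ (A !_α B)`. -/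
theorem sandwich_means {n : ℕ} (A B : Matrix (Fin n) (Fin n) ℂ) (m M α β : ℝ)
    (hA : A.PosDef) (hB : B.PosDef) (hm : 0 < m) (hmM : m ≤ M)
    (hAm : (A - m • (1 : Matrix (Fin n) (Fin n) ℂ)).PosSemidef)
    (hAM : (M • (1 : Matrix (Fin n) (Fin n) ℂ) - A).PosSemidef)
    (hBm : (B - m • (1 : Matrix (Fin n) (Fin n) ℂ)).PosSemidef)
    (hBM : (M • (1 : Matrix (Fin n) (Fin n) ℂ) - B).PosSemidef)
    (hα0 : 0 ≤ α) (hα1 : α ≤ 1) (hβ0 : 0 ≤ β) (hβ1 : β ≤ 1) :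
    (geomMean A B β -
        (max ((1 - α) * (m / M) ^ β + α * (M / m) ^ (1 - β))
             ((1 - α) * (M / m) ^ β + α * (m / M) ^ (1 - β)))⁻¹
          • ((1 - α) • A + α • B)).PosSemidef ∧
    ((max ((1 - α) * (m / M) ^ β + α * (M / m) ^ (1 - β))
          ((1 - α) * (M / m) ^ β + α * (m / M) ^ (1 - β)))
        • harmMean A B α - geomMean A B β).PosSemidef :=
  sandwich_means_general A B m M α β hA hB hm hmM hAm hAM hBm hBM hα0 hα1
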